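/- For any regular expression e and string w, w is accepted by the pointed-expression DFA of e (i.e., move*(•(e),w) has boolean component true) if and only if w ∈ L(e). -/

import Mathlib

namespace PointedRE

inductive PItem (α : Type) : Type
  | empty : PItem α
  | eps : PItem α
  | ch : α → PItem α
  | pch : α → PItem α
  | plus : PItem α → PItem α → PItem α
  | cat : PItem α → PItem α → PItem α
  | star : PItem α → PItem α

namespace PItem

variable {α : Type}

/-- The carrier: erase all points. -/
def carrier : PItem α → RegularExpression α
  | empty => 0
  | eps => 1
  | ch a => RegularExpression.char a
  | pch a => RegularExpression.char a
  | plus e1 e2 => carrier e1 + carrier e2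
  | cat e1 e2 => carrier e1 * carrier e2
  | star e => (carrier e).star

/-- ε(b) : {ε} if b, ∅ otherwise. -/
def ebool (b : Bool) : Language α := if b then 1 else 0

/-- The pointed language of a pointed item. -/
def Lp : PItem α → Language α
  | empty => 0
  | eps => 0
  | ch _ => 0
  | pch a => {[a]}
  | plus e1 e2 => Lp e1 + Lp e2
  | cat e1 e2 => Lp e1 * (carrier e2).matches' + Lp e2
  | star e => Lp e * KStar.kstar (carrier e).matches'

/-- A pointed regular expression (pre): a pointed item with a trailing boolean. -/
abbrev Pre (α : Type) := PItem α × Bool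

/-- The pointed language of a pre. -/
def LpP (p : Pre α) : Language α := Lp p.1 + ebool p.2

/-- Broadcasting a point inside a pointed item. -/
def broadcast : PItem α → Pre α
  | empty => (empty, false)
  | eps => (eps, true)
  | ch a => (pch a, false)
  | pch a => (pch a, false)
  | plus e1 e2 =>
      (plus (broadcast e1).1 (broadcast e2).1, (broadcast e1).2 || (broadcast e2).2)
  | cat e1 e2 =>
      if (broadcast e1).2 then
        (cat (broadcast e1).1 (broadcast e2).1, (broadcast e2).2)
      else (cat (broadcast e1).1 e2, false)
  | star e => (star (broadcast e).1, true)

/-- Lifted sum on pres. -/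
def oplus (p1 p2 : Pre α) : Pre α := (plus p1.1 p2.1, p1.2 || p2.2)

/-- Lifted concatenation on pres. -/
def odot (p1 p2 : Pre α) : Pre α :=
  if p1.2 then (cat p1.1 (broadcast p2.1).1, p2.2 || (broadcast p2.1).2)
  else (cat p1.1 p2.1, p2.2)

/-- Lifted Kleene star on pres. -/
def ostar (p : Pre α) : Pre α :=
  if p.2 then (star (broadcast p.1).1, true) else (star p.1, false)

/-- Broadcasting extended to pres. -/
def broadcastP (p : Pre α) : Pre α :=
  ((broadcast p.1).1, p.2 || (broadcast p.1).2)

/-- The move operation on pointed items. -/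
def move [DecidableEq α] (a : α) : PItem α → Pre α
  | empty => (empty, false)
  | eps => (eps, false)
  | ch b => (ch b, false)
  | pch b => if b = a then (ch b, true) else (ch b, false)
  | plus e1 e2 => oplus (move a e1) (move a e2)
  | cat e1 e2 => odot (move a e1) (move a e2)
  | star e => ostar (move a e)

/-- The move operation iterated along a string (on pres, ignoring the trailing point). -/
def moves [DecidableEq α] : Pre α → List α → Pre α
  | p, [] => p
  | p, a :: w => moves (move a p.1) w

/-- Embedding of regular expressions as point-free pointed items. -/
def embed : RegularExpression α → PItem α
  | .zero => empty
  | .epsilon => eps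
  | .char a => ch a
  | .plus e1 e2 => plus (embed e1) (embed e2)
  | .comp e1 e2 => cat (embed e1) (embed e2)
  | .star e => star (embed e)

/-- Read-back of a pointed item as a set of regular expressions. -/
def R : PItem α → Set (RegularExpression α)
  | empty => ∅
  | eps => ∅
  | ch _ => ∅
  | pch a => {RegularExpression.char a}
  | plus e1 e2 => R e1 ∪ R e2
  | cat e1 e2 => (fun r => r * carrier e2) '' R e1 ∪ R e2
  | star e => (fun r => r * (carrier e).star) '' R e

/-- Read-back of a pre. -/
def RP (p : Pre α) : Set (RegularExpression α) :=
  R p.1 ∪ (if p.2 then {1} else ∅)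

/-- The language of a set of regular expressions. -/
def LS (S : Set (RegularExpression α)) : Language α :=
  {w | ∃ r ∈ S, w ∈ r.matches'}

/-- The look-ahead normal form of a regular expression (without ε). -/
def nf : RegularExpression α → Set (RegularExpression α)
  | .zero => ∅
  | .epsilon => ∅
  | .char a => {RegularExpression.char a}
  | .plus e1 e2 => nf e1 ∪ nf e2
  | .comp e1 e2 =>
      if e1.matchEpsilon then (fun r => r * e2) '' nf e1 ∪ nf e2
      else (fun r => r * e2) '' nf e1
  | .star e => (fun r => r * e.star) '' nf e

/-- The look-ahead normal form with ε added when the expression is nullable. -/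
def nfe (e : RegularExpression α) : Set (RegularExpression α) :=
  nf e ∪ (if e.matchEpsilon then {1} else ∅)

/-- nf_ε lifted to sets of regular expressions. -/
def nfeS (S : Set (RegularExpression α)) : Set (RegularExpression α) :=
  ⋃ r ∈ S, nfe r

/-- Merge of two pointed items (meaningful when they share the same carrier). -/
def merge : PItem α → PItem α → PItem α
  | ch a, pch _ => pch a
  | plus e1 e2, plus f1 f2 => plus (merge e1 f1) (merge e2 f2)
  | cat e1 e2, cat f1 f2 => cat (merge e1 f1) (merge e2 f2)
  | star e, star f => star (merge e f)
  | e, _ => e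

/-- Merge extended to pres. -/
def mergeP (p q : Pre α) : Pre α := (merge p.1 q.1, p.2 || q.2)

end PItem
end PointedRE

/-!
A pointed item `e` denotes `Lp e`, the words read from its points to the end, and a pre `⟨e, b⟩`
denotes `LpP ⟨e, b⟩ = Lp e + ε(b)`. Two identities drive the proof, both by structural induction:
broadcasting adds the language of the carrier, `LpP (•e) = Lp e + L(|e|)`, and moving on a letter
`a` takes the left quotient, `LpP (move a e) = a⁻¹ Lp e`. Hence `moves p w` accepts iff
`w ∈ LpP p`, and for `p = •(embed r)` this language is `L(r)`.

The delicate case is the star, where the empty word must not count as an iteration: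
if `Y + ε(b) = X + M` with `X`, `Y` ε-free, then `Y = X + (M ∖ ε)`, and `(M ∖ ε)∗ = M∗`.
-/

open scoped Computability

namespace Language

variable {α : Type*}

theorem leftQuotient_add (l m : Language α) (x : List α) :
    (l + m).leftQuotient x = l.leftQuotient x + m.leftQuotient x := rfl

theorem leftQuotient_mul_of_nil_notMem {l : Language α} (hl : [] ∉ l) (m : Language α) (a : α) :
    (l * m).leftQuotient [a] = l.leftQuotient [a] * m := by
  ext w
  simp only [mem_leftQuotient, mem_mul, List.singleton_append]
  constructor
  · rintro ⟨_ | ⟨b, u⟩, hu, v, hv, huv⟩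
    · exact absurd hu hl
    · obtain ⟨rfl, rfl⟩ := List.cons_eq_cons.mp huv
      exact ⟨u, hu, v, hv, rfl⟩
  · rintro ⟨u, hu, v, hv, rfl⟩
    exact ⟨a :: u, hu, v, hv, rfl⟩

theorem kstar_sub_one (l : Language α) : (l - 1)∗ = l∗ := by
  ext x
  simp only [mem_kstar_iff_exists_nonempty, mem_sub, mem_one, ne_eq, and_assoc, and_self]

theorem one_add_sub_one_mul_kstar (l : Language α) : 1 + (l - 1) * l∗ = l∗ := by
  have h := one_add_self_mul_kstar_eq_kstar (l - 1)
  rwa [kstar_sub_one] at h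

theorem eq_add_sub_one_of_add_eq {X Y E M : Language α} (hX : [] ∉ X) (hY : [] ∉ Y)
    (hE : E ≤ 1) (h : Y + E = X + M) : Y = X + (M - 1) := by
  ext w
  rcases eq_or_ne w [] with rfl | hw
  · rw [mem_add, mem_sub, mem_one]
    simp [hX, hY]
  · have hwE : w ∉ E := fun hw' => hw ((mem_one w).mp (hE hw'))
    calc w ∈ Y ↔ w ∈ Y + E := by rw [mem_add]; simp [hwE]
      _ ↔ w ∈ X + M := by rw [h]
      _ ↔ w ∈ X + (M - 1) := by rw [mem_add, mem_add, mem_sub, mem_one]; simp [hw]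

theorem mul_kstar_add_one_eq {X Y E M : Language α} (hX : [] ∉ X) (hY : [] ∉ Y)
    (hE : E ≤ 1) (h : Y + E = X + M) : Y * M∗ + 1 = (X + 1) * M∗ := by
  rw [eq_add_sub_one_of_add_eq hX hY hE h, add_mul, add_assoc, add_comm _ 1,
    one_add_sub_one_mul_kstar, add_mul, one_mul]

end Language

namespace PointedRE.PItem

variable {α : Type}

@[simp] theorem ebool_true : (ebool true : Language α) = 1 := rfl

@[simp] theorem ebool_false : (ebool false : Language α) = 0 := rfl

theorem ebool_or (b c : Bool) : (ebool (b || c) : Language α) = ebool b + ebool c := by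
  cases b <;> cases c <;> simp

theorem ebool_le_one (b : Bool) : (ebool b : Language α) ≤ 1 := by
  cases b <;> simp

theorem mem_Lp_pch {a : α} {w : List α} : w ∈ Lp (pch a) ↔ w = [a] := Iff.rfl

theorem nil_notMem_Lp (e : PItem α) : [] ∉ Lp e := by
  induction e with
  | pch a => exact fun h => List.cons_ne_nil a [] (mem_Lp_pch.mp h).symm
  | _ => simp_all [Lp, Language.mem_add, Language.mem_mul, -add_eq_sup]

theorem mem_LpP {p : Pre α} {w : List α} : w ∈ LpP p ↔ w ∈ Lp p.1 ∨ (p.2 = true ∧ w = []) := by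
  obtain ⟨e, _ | _⟩ := p <;> simp [LpP, Language.mem_add, Language.mem_one, -add_eq_sup]

theorem carrier_embed (r : RegularExpression α) : carrier (embed r) = r := by
  induction r <;> simp_all [embed, carrier]

theorem Lp_embed (r : RegularExpression α) : Lp (embed r) = 0 := by
  induction r <;> simp_all [embed, Lp]

theorem carrier_broadcast (e : PItem α) : carrier (broadcast e).1 = carrier e := by
  induction e with
  | cat e1 e2 ih1 ih2 => cases h : (broadcast e1).2 <;> simp_all [broadcast, carrier]
  | _ => simp_all [broadcast, carrier]

theorem carrier_move [DecidableEq α] (a : α) (e : PItem α) : carrier (move a e).1 = carrier e := by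
  induction e with
  | pch b => by_cases h : b = a <;> simp [move, h, carrier]
  | cat e1 e2 ih1 ih2 =>
    cases h : (move a e1).2 <;> simp_all [move, odot, carrier, carrier_broadcast]
  | star e ih => cases h : (move a e).2 <;> simp_all [move, ostar, carrier, carrier_broadcast]
  | _ => simp_all [move, oplus, carrier]

theorem LpP_oplus (p q : Pre α) : LpP (oplus p q) = LpP p + LpP q := by
  simp only [LpP, oplus, Lp, ebool_or]
  abel

-- `hq` is `LpP_broadcast q.1`, taken as a hypothesis so that the induction proving
-- `LpP_broadcast` can use this lemma in its `cat` case.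
theorem LpP_odot {p q : Pre α}
    (hq : LpP (broadcast q.1) = Lp q.1 + (carrier q.1).matches') :
    LpP (odot p q) = LpP p * (carrier q.1).matches' + LpP q := by
  obtain ⟨e, _ | _⟩ := p
  · simp only [odot, LpP, Lp, ebool_false, add_zero, Bool.false_eq_true, if_false, add_assoc]
  · calc LpP (odot (e, true) q)
          = Lp e * (carrier q.1).matches' + LpP (broadcast q.1) + ebool q.2 := by
            simp only [odot, LpP, Lp, if_true, carrier_broadcast, ebool_or]
            abel
      _ = LpP (e, true) * (carrier q.1).matches' + LpP q := by
            rw [hq]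
            simp only [LpP, ebool_true, add_mul, one_mul]
            abel

theorem LpP_broadcast (e : PItem α) : LpP (broadcast e) = Lp e + (carrier e).matches' := by
  induction e with
  | plus e1 e2 ih1 ih2 =>
    rw [show broadcast (plus e1 e2) = oplus (broadcast e1) (broadcast e2) from rfl, LpP_oplus,
      ih1, ih2]
    simp only [Lp, carrier, RegularExpression.matches'_add]
    abel
  | cat e1 e2 ih1 ih2 =>
    have hcat : broadcast (cat e1 e2) = odot (broadcast e1) (e2, false) := by
      simp only [broadcast, odot]; split <;> rfl
    rw [hcat, LpP_odot ih2, ih1]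
    simp only [LpP, Lp, carrier, RegularExpression.matches'_mul, ebool_false, add_zero, add_mul]
    abel
  | star e ih =>
    simp only [broadcast, LpP, Lp, carrier, carrier_broadcast, ebool_true,
      RegularExpression.matches'_star]
    rw [Language.mul_kstar_add_one_eq (nil_notMem_Lp e) (nil_notMem_Lp _) (ebool_le_one _) ih,
      add_mul, one_mul]
  | _ => simp [broadcast, LpP, Lp, carrier]

theorem LpP_ostar (p : Pre α) : LpP (ostar p) = LpP p * (carrier p.1).matches'∗ := by
  obtain ⟨e, _ | _⟩ := p
  · simp [ostar, LpP, Lp]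
  · simp only [ostar, LpP, Lp, if_true, carrier_broadcast, ebool_true]
    exact Language.mul_kstar_add_one_eq (nil_notMem_Lp e) (nil_notMem_Lp _) (ebool_le_one _)
      (LpP_broadcast e)

theorem LpP_move [DecidableEq α] (a : α) (e : PItem α) :
    LpP (move a e) = (Lp e).leftQuotient [a] := by
  induction e with
  | pch b =>
    ext w
    rw [Language.mem_leftQuotient, mem_Lp_pch]
    by_cases h : b = a
    · subst h
      simp [move, LpP, Lp, Language.mem_one]
    · simp [move, LpP, Lp, h, Ne.symm h]
  | plus e1 e2 ih1 ih2 =>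
    rw [move, LpP_oplus, ih1, ih2, Lp, Language.leftQuotient_add]
  | cat e1 e2 ih1 ih2 =>
    rw [move, LpP_odot (LpP_broadcast _), ih1, ih2, carrier_move, Lp, Language.leftQuotient_add,
      Language.leftQuotient_mul_of_nil_notMem (nil_notMem_Lp e1)]
  | star e ih =>
    rw [move, LpP_ostar, ih, carrier_move, Lp,
      Language.leftQuotient_mul_of_nil_notMem (nil_notMem_Lp e)]
  | _ => ext w; simp [move, LpP, Lp, Language.mem_leftQuotient]

theorem moves_snd_eq_true_iff [DecidableEq α] (p : Pre α) (w : List α) :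
    (moves p w).2 = true ↔ w ∈ LpP p := by
  induction w generalizing p with
  | nil => simp [moves, mem_LpP, nil_notMem_Lp]
  | cons a w ih =>
    rw [moves, ih, LpP_move, Language.mem_leftQuotient, mem_LpP]
    simp

end PointedRE.PItem

open PointedRE PItem

/-- w is accepted by the pointed-expression DFA of e iff w ∈ L(e). -/
theorem stmt12 {α : Type} [DecidableEq α] (r : RegularExpression α) (w : List α) :
    (moves (broadcast (embed r)) w).2 = true ↔ w ∈ r.matches' := by
  rw [moves_snd_eq_true_iff, LpP_broadcast, Lp_embed, carrier_embed, zero_add]
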